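/- arXiv:1205.3596 — 2 statements merged into one kernel-verified Lean document; each statement's English description precedes it below -/
import Mathlib

section
/- Let p, q be primes with p > 4q and p ≡ 3 (mod 4), and assume q^((p-1)/2) ≡ -1 (mod p). Let a be an integer with a² < 4q. If a² ≡ 3q (mod p) or a² ≡ 0 (mod p), then either a = 0, or q = 3 and |a| = 3. -/
theorem trace_dichotomy (p q : ℕ) (hp : p.Prime) (hq : q.Prime)
    (hpq : p > 4 * q) (hp3 : p % 4 = 3)
    (hqp : (q : ℤ) ^ ((p - 1) / 2) ≡ -1 [ZMOD p])
    (a : ℤ) (ha : a ^ 2 < 4 * q)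
    (h : (a : ZMod p) ^ 2 = 3 * (q : ZMod p) ∨ (a : ZMod p) ^ 2 = 0) :
    a = 0 ∨ (q = 3 ∧ |a| = 3) := by
  have hq2 : (2 : ℤ) ≤ q := by exact_mod_cast hq.two_le
  have hpq' : (4 : ℤ) * q < p := by exact_mod_cast hpq
  have ha0 : 0 ≤ a ^ 2 := sq_nonneg a
  rcases h with h | h
  · right
    have h1 : ((a ^ 2 - 3 * q : ℤ) : ZMod p) = 0 := by push_cast; rw [h]; ring
    have h2 : (p : ℤ) ∣ a ^ 2 - 3 * q := by
      exact_mod_cast (ZMod.intCast_zmod_eq_zero_iff_dvd _ p).mp h1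
    have h3 : a ^ 2 - 3 * q = 0 := by
      refine Int.eq_zero_of_abs_lt_dvd h2 ?_
      rw [abs_lt]
      constructor <;> nlinarith
    have heq : a ^ 2 = 3 * q := by omega
    have hqa : (q : ℤ) ∣ a := by
      have : (q : ℤ) ∣ a * a := ⟨3, by linarith [sq a ▸ heq]⟩
      rcases (Int.Prime.dvd_mul' (by exact_mod_cast hq) this) with h | h <;> exact h
    rcases hqa with ⟨k, hk⟩
    have hq3 : (q : ℤ) * k ^ 2 = 3 := by
      have : (q:ℤ) ^ 2 * k ^ 2 = 3 * q := by rw [← heq, hk]; ring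
      nlinarith
    have hqd : (q : ℤ) ∣ 3 := ⟨k ^ 2, hq3.symm⟩
    have hq3' : q = 3 := by
      have : q ∣ 3 := by exact_mod_cast hqd
      exact (Nat.prime_dvd_prime_iff_eq hq (by norm_num)).mp this
    refine ⟨hq3', ?_⟩
    have ha9 : a ^ 2 = 9 := by rw [heq, hq3']; norm_num
    have : |a| ^ 2 = 3 ^ 2 := by rw [sq_abs, ha9]; norm_num
    nlinarith [abs_nonneg a]
  · left
    have h2 : (p : ℤ) ∣ a ^ 2 := by
      exact_mod_cast (ZMod.intCast_zmod_eq_zero_iff_dvd _ p).mp (by push_cast; rw [h] : ((a^2 : ℤ) : ZMod p) = 0)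
    have h3 : a ^ 2 = 0 := by
      have := Int.eq_zero_of_abs_lt_dvd h2 (by rw [abs_lt]; constructor <;> nlinarith)
      omega
    exact pow_eq_zero_iff (by norm_num) |>.mp h3
end

section
/- Let p, q be primes with p ≡ 3 (mod 4), q a quadratic non-residue mod p, and p > 4q. Let β, β̄ be the roots of X² + aX + q with a ∈ ℤ, a² < 4q, and suppose in F_p (via a fixed embedding of ℤ[β] modulo a prime above p) that β ≡ x·c and β̄ ≡ x^{-1}·c' where x^6 = 1 and c·c' corresponds to powers of q^{(p+1)/4}. Then β² + β̄² ≡ q or -2q (mod p), and hence a² = (β+β̄)² ≡ 3q or 0 (mod p). -/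
theorem frobenius_trace_cong (p q : ℕ) (hp : p.Prime) (hq : q.Prime)
    (hpq : p > 4 * q) (hp3 : p % 4 = 3)
    (hqp : ((q : ZMod p)) ^ ((p - 1) / 2) = -1)
    (b b' x c c' : ZMod p) (hx0 : x ≠ 0) (hx6 : x ^ 6 = 1)
    (hcc' : c * c' = (q : ZMod p))
    (hc : c ^ 2 = (q : ZMod p) ^ ((p + 1) / 2))
    (hc' : c' ^ 2 = (q : ZMod p) ^ ((p + 1) / 2))
    (hb : b = x * c) (hb' : b' = x⁻¹ * c') :
    (b ^ 2 + b' ^ 2 = (q : ZMod p) ∨ b ^ 2 + b' ^ 2 = -2 * (q : ZMod p)) ∧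
      ((b + b') ^ 2 = 3 * (q : ZMod p) ∨ (b + b') ^ 2 = 0) := by
  haveI : Fact p.Prime := ⟨hp⟩
  have hp2 : 2 ≤ p := hp.two_le
  -- (p+1)/2 = (p-1)/2 + 1
  have hodd : p % 2 = 1 := by omega
  have hexp : (p + 1) / 2 = (p - 1) / 2 + 1 := by omega
  have hcq : c ^ 2 = -(q : ZMod p) := by
    rw [hc, hexp, pow_succ, hqp]; ring
  have hc'q : c' ^ 2 = -(q : ZMod p) := by
    rw [hc', hexp, pow_succ, hqp]; ring
  -- y = x^2 satisfies y^3 = 1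
  set y : ZMod p := x ^ 2 with hy
  have hy3 : y ^ 3 = 1 := by rw [hy, ← pow_mul]; exact hx6
  have hy0 : y ≠ 0 := pow_ne_zero _ hx0
  have hxinv : x⁻¹ ^ 2 = y⁻¹ := by
    rw [hy, ← inv_pow]
  have hyinv : y⁻¹ = y ^ 2 := by
    field_simp
    linear_combination -hy3
  have hsum : y + y ^ 2 = 2 ∨ y + y ^ 2 = -1 := by
    have : (y - 1) * (y ^ 2 + y + 1) = 0 := by
      have : y ^ 3 - 1 = 0 := by rw [hy3]; ring
      linear_combination this
    rcases mul_eq_zero.mp this with h | h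
    · left
      have h1 : y = 1 := sub_eq_zero.mp h
      rw [h1]; ring
    · right; linear_combination h
  have hbb : b ^ 2 + b' ^ 2 = -(q : ZMod p) * (y + y ^ 2) := by
    rw [hb, hb', mul_pow, mul_pow, hcq, hc'q, hxinv, hyinv]; ring
  have key : b ^ 2 + b' ^ 2 = (q : ZMod p) ∨ b ^ 2 + b' ^ 2 = -2 * (q : ZMod p) := by
    rcases hsum with h | h
    · right; rw [hbb, h]; ring
    · left; rw [hbb, h]; ring
  refine ⟨key, ?_⟩
  have hbb' : b * b' = (q : ZMod p) := by
    rw [hb, hb']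
    field_simp
    linear_combination hcc'
  have hsq : (b + b') ^ 2 = b ^ 2 + b' ^ 2 + 2 * (q : ZMod p) := by
    rw [← hbb']; ring
  rcases key with h | h
  · left; rw [hsq, h]; ring
  · right; rw [hsq, h]; ring
end
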